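/- arXiv:2603.00275 — 8 statements merged into one kernel-verified Lean document; each statement's English description precedes it below -/
import Mathlib

section
/- Let N ≥ 1 be an integer and τc, τ0, τ1, R real numbers with τc ≠ 0. Define the 2×2 matrices L_c = [[1-2N, (N-1)τc], [4N/τc, 1-2N]], F(t) = [[1, t], [0, 1]], and C = [[1, 0], [R, 1]]. Let M = L_c · F(τ1) · C · F(τ0) · C · F(τ1). Then (1/2)·tr(M) = 1 + (1/(2τc))·[2N - ((N-1)τc - 2Nτ1)·R]·[2(2τ1 + τ0 - τc) - (τc - 2τ1)·τ0·R]. -/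
theorem stmt_2 (N : ℕ) (hN : 1 ≤ N) (τc τ0 τ1 R : ℝ) (hτc : τc ≠ 0) :
    (1 / 2) * Matrix.trace
      (!![1 - 2 * (N : ℝ), ((N : ℝ) - 1) * τc; 4 * (N : ℝ) / τc, 1 - 2 * (N : ℝ)] *
        !![(1 : ℝ), τ1; 0, 1] * !![(1 : ℝ), 0; R, 1] * !![(1 : ℝ), τ0; 0, 1] *
        !![(1 : ℝ), 0; R, 1] * !![(1 : ℝ), τ1; 0, 1])
      = 1 + (1 / (2 * τc)) *
          (2 * (N : ℝ) - (((N : ℝ) - 1) * τc - 2 * (N : ℝ) * τ1) * R) *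
          (2 * (2 * τ1 + τ0 - τc) - (τc - 2 * τ1) * τ0 * R) := by
  simp [Matrix.mul_fin_two, Matrix.trace_fin_two]
  field_simp
  ring
end

section
/- Let N ≥ 1 be an integer and τc, τ0, τ1, R real numbers with τc ≠ 0. Define M = L_c · F(τ1) · C · F(τ0) · C · F(τ1) with L_c = [[1-2N, (N-1)τc], [4N/τc, 1-2N]], F(t) = [[1, t], [0, 1]], C = [[1, 0], [R, 1]]. Then (1/2)·tr(M) = -1 + (1/(2τc))·[2 - (τc - 2τ1)·R]·[2(τc + N(2τ1 + τ0 - τc)) - ((N-1)τc - 2Nτ1)·τ0·R]. -/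
theorem stmt_3 (N : ℕ) (hN : 1 ≤ N) (τc τ0 τ1 R : ℝ) (hτc : τc ≠ 0) :
    (1 / 2) * Matrix.trace
      (!![1 - 2 * (N : ℝ), ((N : ℝ) - 1) * τc; 4 * (N : ℝ) / τc, 1 - 2 * (N : ℝ)] *
        !![(1 : ℝ), τ1; 0, 1] * !![(1 : ℝ), 0; R, 1] * !![(1 : ℝ), τ0; 0, 1] *
        !![(1 : ℝ), 0; R, 1] * !![(1 : ℝ), τ1; 0, 1])
      = -1 + (1 / (2 * τc)) *
          (2 - (τc - 2 * τ1) * R) *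
          (2 * (τc + (N : ℝ) * (2 * τ1 + τ0 - τc)) -
            (((N : ℝ) - 1) * τc - 2 * (N : ℝ) * τ1) * τ0 * R) := by
  simp [Matrix.mul_fin_two, Matrix.trace_fin_two]
  field_simp
  ring
end

section
/- Let r > 0, N ≥ 3, and for ε ∈ (0, π/(2N)) set α1(ε) = π/N + ((N-1)/N)·ε and D(ε) = (1/cos(ε) - 1)·(2r·sin(α1(ε)) - τ0) + 2r·(sin(α1(ε)) - sin(α1(ε) - ε)) where 0 < τ0 < 2r·sin(α1(ε)). Then there exists a constant C > 0 (depending only on r and N) such that 0 < D(ε) ≤ C·ε for all ε ∈ (0, π/(2N)). -/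
lemma stmt_5_aux (r ε α τ0 : ℝ) (hr : 0 < r) (hε0 : 0 < ε) (hε6 : ε < Real.pi / 6)
    (hαε0 : 0 < α - ε) (hαhalf : α ≤ Real.pi / 2)
    (hτ0 : 0 < τ0) (hτ1 : τ0 < 2 * r * Real.sin α) :
    0 < (1 / Real.cos ε - 1) * (2 * r * Real.sin α - τ0)
        + 2 * r * (Real.sin α - Real.sin (α - ε))
      ∧ (1 / Real.cos ε - 1) * (2 * r * Real.sin α - τ0)
        + 2 * r * (Real.sin α - Real.sin (α - ε)) ≤ (4 * r) * ε := by
  have hπ := Real.pi_pos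
  have hε1 : ε < 1 := by nlinarith [Real.pi_lt_d2]
  have hsinlt : Real.sin (α - ε) < Real.sin α :=
    Real.sin_lt_sin_of_lt_of_le_pi_div_two (by linarith) hαhalf (by linarith)
  have hsin1 : Real.sin α ≤ 1 := Real.sin_le_one α
  -- cos ε facts via half angle
  have hsh : Real.sin (ε / 2) ≤ ε / 2 := Real.sin_le (by linarith)
  have hshpos : 0 < Real.sin (ε / 2) :=
    Real.sin_pos_of_pos_of_lt_pi (by linarith) (by linarith)
  have hhalf : Real.cos ε = 1 - 2 * Real.sin (ε / 2) ^ 2 := by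
    have h1 := Real.cos_two_mul (ε / 2)
    have h2 := Real.sin_sq_add_cos_sq (ε / 2)
    rw [show 2 * (ε / 2) = ε by ring] at h1
    linarith
  have hcos1 : Real.cos ε < 1 := by nlinarith
  have hcoslb : 1 - Real.cos ε ≤ ε ^ 2 / 2 := by nlinarith
  have hcoshalf : (1:ℝ) / 2 ≤ Real.cos ε := by nlinarith
  have hcospos : (0:ℝ) < Real.cos ε := by linarith
  -- sin α - sin (α - ε) ≤ ε
  have hlip : Real.sin α - Real.sin (α - ε) ≤ ε := by
    have h1 := Real.sin_sub_sin α (α - ε)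
    rw [show (α - (α - ε)) / 2 = ε / 2 by ring] at h1
    have h5 : Real.cos ((α + (α - ε)) / 2) ≤ 1 := Real.cos_le_one _
    have h6 : 0 ≤ Real.cos ((α + (α - ε)) / 2) := by
      apply Real.cos_nonneg_of_mem_Icc
      constructor <;> [linarith; linarith]
    nlinarith
  have hinv : 1 / Real.cos ε - 1 ≤ ε := by
    rw [div_sub_one (ne_of_gt hcospos), div_le_iff₀ hcospos]
    nlinarith
  have hinvpos : 0 < 1 / Real.cos ε - 1 := by
    rw [lt_sub_iff_add_lt, zero_add, lt_div_iff₀ hcospos, one_mul]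
    exact hcos1
  constructor
  · have h := mul_pos hinvpos (by linarith : 0 < 2 * r * Real.sin α - τ0)
    nlinarith
  · have hτ0' : 2 * r * Real.sin α - τ0 ≤ 2 * r := by nlinarith
    have ht1 : (1 / Real.cos ε - 1) * (2 * r * Real.sin α - τ0) ≤ ε * (2 * r) :=
      mul_le_mul hinv hτ0' (by linarith) (by linarith)
    have ht2 : 2 * r * (Real.sin α - Real.sin (α - ε)) ≤ 2 * r * ε :=
      mul_le_mul_of_nonneg_left hlip (by linarith)
    nlinarith

theorem stmt_5 (r : ℝ) (hr : 0 < r) (N : ℕ) (hN : 3 ≤ N) :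
    ∃ C : ℝ, 0 < C ∧
      ∀ ε : ℝ, ε ∈ Set.Ioo 0 (Real.pi / (2 * N)) →
        ∀ τ0 : ℝ,
          0 < τ0 → τ0 < 2 * r * Real.sin (Real.pi / N + ((N : ℝ) - 1) / N * ε) →
          (0 < (1 / Real.cos ε - 1) *
              (2 * r * Real.sin (Real.pi / N + ((N : ℝ) - 1) / N * ε) - τ0)
            + 2 * r * (Real.sin (Real.pi / N + ((N : ℝ) - 1) / N * ε)
                - Real.sin (Real.pi / N + ((N : ℝ) - 1) / N * ε - ε))
          ∧ (1 / Real.cos ε - 1) *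
              (2 * r * Real.sin (Real.pi / N + ((N : ℝ) - 1) / N * ε) - τ0)
            + 2 * r * (Real.sin (Real.pi / N + ((N : ℝ) - 1) / N * ε)
                - Real.sin (Real.pi / N + ((N : ℝ) - 1) / N * ε - ε)) ≤ C * ε) := by
  have hπ := Real.pi_pos
  refine ⟨4 * r, by positivity, ?_⟩
  rintro ε ⟨hε0, hεU⟩ τ0 hτ0 hτ1
  have hN3 : (3:ℝ) ≤ N := by exact_mod_cast hN
  have hNpos : (0:ℝ) < N := by linarith
  have h2N6 : Real.pi / (2 * N) ≤ Real.pi / 6 :=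
    div_le_div_of_nonneg_left hπ.le (by norm_num) (by linarith)
  have hε6 : ε < Real.pi / 6 := lt_of_lt_of_le hεU h2N6
  have hhalf : Real.pi / (2 * N) + Real.pi / (2 * N) = Real.pi / N := by
    field_simp; ring
  have hfrac0 : (0:ℝ) ≤ ((N:ℝ) - 1) / N := div_nonneg (by linarith) hNpos.le
  have hfrac1 : ((N:ℝ) - 1) / N ≤ 1 := by
    rw [div_le_one hNpos]; linarith
  have hprod0 : 0 ≤ ((N:ℝ) - 1) / N * ε := mul_nonneg hfrac0 hε0.le
  have hprodle : ((N:ℝ) - 1) / N * ε ≤ ε := by nlinarith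
  apply stmt_5_aux r ε _ τ0 hr hε0 hε6 ?_ ?_ hτ0 hτ1
  · -- 0 < α - ε
    linarith
  · -- α ≤ π / 2
    have h36 : 3 * (Real.pi / (2 * N)) ≤ Real.pi / 2 := by
      have : Real.pi / 6 + Real.pi / 6 + Real.pi / 6 = Real.pi / 2 := by ring
      linarith
    linarith
end

section
/- Let N ≥ 1 be an integer, τc ≠ 0, and τ0, τ1 real. Define f(R) = (1/2)·tr(L_c · F(τ1) · C(R) · F(τ0) · C(R) · F(τ1)) where L_c = [[1-2N, (N-1)τc], [4N/τc, 1-2N]], F(t) = [[1,t],[0,1]], C(R) = [[1,0],[R,1]]. Then the coefficient of R² in the quadratic polynomial f(R) equals (N·τ0/(2τc))·(τ0 - D)·(τ0 - τc/N - D), where D = 2τ1 + τ0 - τc. -/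
theorem stmt_8 (N : ℕ) (hN : 1 ≤ N) (τc τ0 τ1 : ℝ) (hτc : τc ≠ 0) :
    ∃ b c : ℝ, ∀ R : ℝ,
      (1 / 2) * Matrix.trace
        (!![1 - 2 * (N : ℝ), ((N : ℝ) - 1) * τc; 4 * (N : ℝ) / τc, 1 - 2 * (N : ℝ)] *
          !![(1 : ℝ), τ1; 0, 1] * !![(1 : ℝ), 0; R, 1] * !![(1 : ℝ), τ0; 0, 1] *
          !![(1 : ℝ), 0; R, 1] * !![(1 : ℝ), τ1; 0, 1])
      = ((N : ℝ) * τ0 / (2 * τc)) * (τ0 - (2 * τ1 + τ0 - τc)) *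
          (τ0 - τc / N - (2 * τ1 + τ0 - τc)) * R ^ 2 + b * R + c := by
  have hN0 : (N : ℝ) ≠ 0 := by positivity
  refine ⟨2 * τ1 + τ0 - τc + 4 * N * τ1 ^ 2 / τc + 4 * N * τ0 * τ1 / τc - 4 * N * τ1
      - 2 * N * τ0 + N * τc,
    1 + 4 * N * τ1 / τc + 2 * N * τ0 / τc - 2 * N, fun R => ?_⟩
  simp [Matrix.trace_fin_two, Matrix.mul_fin_two]
  field_simp
  ring
end

section
/- Let N ≥ 1, τc > 0, τ0 > 0, τ1 real, D = 2τ1 + τ0 - τc, and assume 0 < D < τ0 and τ0 < τc/N + D (i.e. R2 := 2/(τ0 - τc/N - D) < 0). With f(R) = (1/2)·tr(L_c·F(τ1)·C(R)·F(τ0)·C(R)·F(τ1)) as above, for every R with R2 - 2/τ0 < R < R2 we have -1 < f(R) < 1. -/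
/-!
Writing `D = 2τ₁ + τ₀ - τc` and `K = N(τ₀ - D) - τc`, the half-trace `f` of the cycle matrix
satisfies two factorisations into linear forms in `R`:
`2τc(f + 1) = (τ₀KR - 2(ND + τc))((τ₀ - D)R - 2)` and `2τc(f - 1) = (KR - 2N)(τ₀(τ₀ - D)R - 2D)`.
With `q = τ₀ - τc/N - D < 0` we have `K = Nq`, so the window `2/q - 2/τ₀ < R < 2/q` says exactly that
`R < 0`, `KR > 2N` and `τ₀KR < 2(ND + τc)`; together with `0 < D < τ₀` this fixes the sign of
every factor.
-/

open Matrix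

noncomputable section

-- The paper's `F(t)`, `C(R)` and `L_c`.
def freeFlight (t : ℝ) : Matrix (Fin 2) (Fin 2) ℝ := !![1, t; 0, 1]

def collision (R : ℝ) : Matrix (Fin 2) (Fin 2) ℝ := !![1, 0; R, 1]

def cornerMatrix (n τc : ℝ) : Matrix (Fin 2) (Fin 2) ℝ :=
  !![1 - 2 * n, (n - 1) * τc; 4 * n / τc, 1 - 2 * n]

def cycleMatrix (n τc τ0 τ1 R : ℝ) : Matrix (Fin 2) (Fin 2) ℝ :=
  cornerMatrix n τc * freeFlight τ1 * collision R * freeFlight τ0 * collision R * freeFlight τ1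

end

section CycleTrace

variable {n τc τ0 τ1 R : ℝ}

theorem mul_trace_cycleMatrix (hτc : τc ≠ 0) :
    τc * trace (cycleMatrix n τc τ0 τ1 R) =
      2 * τc * (1 - 2 * n) * (1 + R * τ0 + τ1 * R * (2 + R * τ0))
      + (n - 1) * τc ^ 2 * R * (2 + R * τ0)
      + 4 * n * (τ0 + 2 * τ1 * (1 + R * τ0) + τ1 ^ 2 * R * (2 + R * τ0)) := by
  simp only [cycleMatrix, cornerMatrix, freeFlight, collision, mul_fin_two, trace_fin_two_of]
  field_simp
  ring

variable {D : ℝ}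

theorem two_mul_half_trace_cycleMatrix_add_one (hτc : τc ≠ 0) (hD : D = 2 * τ1 + τ0 - τc) :
    2 * τc * ((1 / 2) * trace (cycleMatrix n τc τ0 τ1 R) + 1) =
      (τ0 * (n * (τ0 - D) - τc) * R - 2 * (n * D + τc)) * ((τ0 - D) * R - 2) := by
  subst hD
  linear_combination (mul_trace_cycleMatrix hτc : τc * trace (cycleMatrix n τc τ0 τ1 R) = _)

theorem two_mul_half_trace_cycleMatrix_sub_one (hτc : τc ≠ 0) (hD : D = 2 * τ1 + τ0 - τc) :
    2 * τc * ((1 / 2) * trace (cycleMatrix n τc τ0 τ1 R) - 1) =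
      ((n * (τ0 - D) - τc) * R - 2 * n) * (τ0 * (τ0 - D) * R - 2 * D) := by
  subst hD
  linear_combination (mul_trace_cycleMatrix hτc : τc * trace (cycleMatrix n τc τ0 τ1 R) = _)

end CycleTrace

section CollisionWindow

variable {n τc τ0 D R : ℝ}

theorem collision_window_bounds (hn : 0 < n) (hτ0 : 0 < τ0) (hq : τ0 - τc / n - D < 0)
    (hR1 : 2 / (τ0 - τc / n - D) - 2 / τ0 < R) (hR2 : R < 2 / (τ0 - τc / n - D)) :
    R < 0 ∧ 2 * n < (n * (τ0 - D) - τc) * R ∧ τ0 * (n * (τ0 - D) - τc) * R < 2 * (n * D + τc) := by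
  set q := τ0 - τc / n - D with hq_def
  have hK : n * (τ0 - D) - τc = n * q := by
    rw [hq_def]
    field_simp
    ring
  have hRq : 2 < R * q := (lt_div_iff_of_neg hq).mp hR2
  have hRq' : (R * τ0 + 2) * q < 2 * τ0 := by
    have h := (div_lt_iff_of_neg hq).mp (sub_lt_iff_lt_add.mp hR1)
    calc (R * τ0 + 2) * q = (R + 2 / τ0) * q * τ0 := by field_simp
      _ < 2 * τ0 := mul_lt_mul_of_pos_right h hτ0
  refine ⟨hR2.trans (div_neg_of_pos_of_neg two_pos hq), ?_, ?_⟩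
  · rw [hK]
    nlinarith
  · have hnD : n * D + τc = n * τ0 - n * q := by linear_combination -hK
    rw [hK, hnD]
    nlinarith

end CollisionWindow

theorem stmt_10 (N : ℕ) (hN : 1 ≤ N) (τc τ0 τ1 : ℝ) (hτc : 0 < τc) (hτ0 : 0 < τ0)
    (hD : 0 < 2 * τ1 + τ0 - τc) (hD' : 2 * τ1 + τ0 - τc < τ0)
    (hneg : τ0 < τc / N + (2 * τ1 + τ0 - τc))
    (R : ℝ)
    (hR1 : 2 / (τ0 - τc / N - (2 * τ1 + τ0 - τc)) - 2 / τ0 < R)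
    (hR2 : R < 2 / (τ0 - τc / N - (2 * τ1 + τ0 - τc))) :
    -1 < (1 / 2) * Matrix.trace
        (!![1 - 2 * (N : ℝ), ((N : ℝ) - 1) * τc; 4 * (N : ℝ) / τc, 1 - 2 * (N : ℝ)] *
          !![(1 : ℝ), τ1; 0, 1] * !![(1 : ℝ), 0; R, 1] * !![(1 : ℝ), τ0; 0, 1] *
          !![(1 : ℝ), 0; R, 1] * !![(1 : ℝ), τ1; 0, 1])
    ∧ (1 / 2) * Matrix.trace
        (!![1 - 2 * (N : ℝ), ((N : ℝ) - 1) * τc; 4 * (N : ℝ) / τc, 1 - 2 * (N : ℝ)] *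
          !![(1 : ℝ), τ1; 0, 1] * !![(1 : ℝ), 0; R, 1] * !![(1 : ℝ), τ0; 0, 1] *
          !![(1 : ℝ), 0; R, 1] * !![(1 : ℝ), τ1; 0, 1]) < 1 := by
  change -1 < (1 / 2) * trace (cycleMatrix N τc τ0 τ1 R)
    ∧ (1 / 2) * trace (cycleMatrix N τc τ0 τ1 R) < 1
  have hn : (0 : ℝ) < N := by exact_mod_cast hN
  set D := 2 * τ1 + τ0 - τc with hD_def
  obtain ⟨hR, hKR, hτ0KR⟩ := collision_window_bounds hn hτ0 (by linarith) hR1 hR2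
  have h2τc : (0 : ℝ) ≤ 2 * τc := by positivity
  constructor
  · have h := two_mul_half_trace_cycleMatrix_add_one (n := N) (R := R) hτc.ne' hD_def
    have hpos : 0 < (τ0 * (N * (τ0 - D) - τc) * R - 2 * (N * D + τc)) * ((τ0 - D) * R - 2) :=
      mul_pos_of_neg_of_neg (by linarith) (by nlinarith)
    linarith [pos_of_mul_pos_right (h ▸ hpos) h2τc]
  · have h := two_mul_half_trace_cycleMatrix_sub_one (n := N) (R := R) hτc.ne' hD_def
    have hprod : ((N * (τ0 - D) - τc) * R - 2 * N) * (τ0 * (τ0 - D) * R - 2 * D) < 0 :=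
      mul_neg_of_pos_of_neg (by linarith) (by nlinarith [mul_pos hτ0 (sub_pos.mpr hD')])
    linarith [neg_of_mul_neg_right (h ▸ hprod) h2τc]
end

section
/- Let N ≥ 1, τc ≠ 0, τ0 ≠ 0, τ1 real, D = 2τ1 + τ0 - τc, and assume τ0 ≠ D and τ0 ≠ τc/N + D. Define f(R) = (1/2)·tr(L_c·F(τ1)·C(R)·F(τ0)·C(R)·F(τ1)) as above, R1 = 2/(τ0-D) - 2/τ0 and R2 = 2/(τ0 - τc/N - D). Then f(R) = 1 if and only if R = R1 or R = R2, and f(R) = -1 if and only if R = R1 + 2/τ0 or R = R2 - 2/τ0. -/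
/-!
The monodromy `F(τ₁) C(R) F(τ₀) C(R) F(τ₁)` has entries quadratic in `R`, so `f` is a quadratic
polynomial in `R` with leading coefficient `k = τ₀ (τc - 2τ₁)(n (τc - 2τ₁) - τc) / (2τc)`, which the
hypotheses make nonzero. Both `f - 1` and `f + 1` factor explicitly over `ℝ`, and the four roots
are read off the factorizations.
-/

/-- The function `f(R)`, with the integer `N` replaced by a real `n`. -/
noncomputable def halfTrace (n τc τ0 τ1 R : ℝ) : ℝ :=
  (1 / 2) * Matrix.trace
    (!![1 - 2 * n, (n - 1) * τc; 4 * n / τc, 1 - 2 * n] *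
      !![(1 : ℝ), τ1; 0, 1] * !![(1 : ℝ), 0; R, 1] * !![(1 : ℝ), τ0; 0, 1] *
      !![(1 : ℝ), 0; R, 1] * !![(1 : ℝ), τ1; 0, 1])

lemma mul_sub_mul_sub_eq_zero_iff {K : Type*} [Field K] {k x a b : K} (hk : k ≠ 0) :
    k * (x - a) * (x - b) = 0 ↔ x = a ∨ x = b := by
  simp [hk, sub_eq_zero]

section halfTrace

variable {n τc τ0 τ1 : ℝ}

/- `F(τ₁) C(R) F(τ₀) C(R) F(τ₁) = !![u + τ₁ v, τ₀ + 2 τ₁ u + τ₁² v; v, u + τ₁ v]`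
with `u = 1 + τ₀ R` and `v = 2R + τ₀ R²`. -/
lemma halfTrace_eq (R : ℝ) :
    halfTrace n τc τ0 τ1 R =
      (1 - 2 * n) * (1 + τ0 * R + τ1 * (2 * R + τ0 * R ^ 2)) +
        (n - 1) * τc * (2 * R + τ0 * R ^ 2) / 2 +
        2 * n * (τ0 + 2 * τ1 * (1 + τ0 * R) + τ1 ^ 2 * (2 * R + τ0 * R ^ 2)) / τc := by
  simp only [halfTrace, Matrix.mul_fin_two, Matrix.trace_fin_two_of]
  ring

lemma halfTrace_sub_one (hτc : τc ≠ 0) (hτ0 : τ0 ≠ 0) (ha : τc - 2 * τ1 ≠ 0)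
    (hb : n * (τc - 2 * τ1) - τc ≠ 0) (R : ℝ) :
    halfTrace n τc τ0 τ1 R - 1 =
      τ0 * (τc - 2 * τ1) * (n * (τc - 2 * τ1) - τc) / (2 * τc) *
        (R - (2 / (τc - 2 * τ1) - 2 / τ0)) * (R - 2 * n / (n * (τc - 2 * τ1) - τc)) := by
  rw [halfTrace_eq]
  field_simp
  ring

lemma halfTrace_add_one (hτc : τc ≠ 0) (hτ0 : τ0 ≠ 0) (ha : τc - 2 * τ1 ≠ 0)
    (hb : n * (τc - 2 * τ1) - τc ≠ 0) (R : ℝ) :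
    halfTrace n τc τ0 τ1 R + 1 =
      τ0 * (τc - 2 * τ1) * (n * (τc - 2 * τ1) - τc) / (2 * τc) *
        (R - 2 / (τc - 2 * τ1)) * (R - (2 * n / (n * (τc - 2 * τ1) - τc) - 2 / τ0)) := by
  rw [halfTrace_eq]
  field_simp
  ring

end halfTrace

theorem stmt_12 (N : ℕ) (hN : 1 ≤ N) (τc τ0 τ1 : ℝ) (hτc : τc ≠ 0) (hτ0 : τ0 ≠ 0)
    (h1 : τ0 ≠ 2 * τ1 + τ0 - τc)
    (h2 : τ0 ≠ τc / N + (2 * τ1 + τ0 - τc)) :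
    ∀ R : ℝ,
      ((1 / 2) * Matrix.trace
          (!![1 - 2 * (N : ℝ), ((N : ℝ) - 1) * τc; 4 * (N : ℝ) / τc, 1 - 2 * (N : ℝ)] *
            !![(1 : ℝ), τ1; 0, 1] * !![(1 : ℝ), 0; R, 1] * !![(1 : ℝ), τ0; 0, 1] *
            !![(1 : ℝ), 0; R, 1] * !![(1 : ℝ), τ1; 0, 1]) = 1
        ↔ (R = 2 / (τ0 - (2 * τ1 + τ0 - τc)) - 2 / τ0 ∨
           R = 2 / (τ0 - τc / N - (2 * τ1 + τ0 - τc))))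
      ∧
      ((1 / 2) * Matrix.trace
          (!![1 - 2 * (N : ℝ), ((N : ℝ) - 1) * τc; 4 * (N : ℝ) / τc, 1 - 2 * (N : ℝ)] *
            !![(1 : ℝ), τ1; 0, 1] * !![(1 : ℝ), 0; R, 1] * !![(1 : ℝ), τ0; 0, 1] *
            !![(1 : ℝ), 0; R, 1] * !![(1 : ℝ), τ1; 0, 1]) = -1
        ↔ (R = 2 / (τ0 - (2 * τ1 + τ0 - τc)) - 2 / τ0 + 2 / τ0 ∨
           R = 2 / (τ0 - τc / N - (2 * τ1 + τ0 - τc)) - 2 / τ0)) := by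
  intro R
  have hn : (N : ℝ) ≠ 0 := Nat.cast_ne_zero.mpr (by omega)
  have ha' : τ0 - (2 * τ1 + τ0 - τc) = τc - 2 * τ1 := by ring
  have hb' : τ0 - τc / N - (2 * τ1 + τ0 - τc) = (N * (τc - 2 * τ1) - τc) / N := by
    field_simp
    ring
  have ha : τc - 2 * τ1 ≠ 0 := ha' ▸ sub_ne_zero.mpr h1
  have hb : N * (τc - 2 * τ1) - τc ≠ 0 := by
    have := sub_ne_zero.mpr h2
    rw [← sub_sub, hb'] at this
    exact (div_ne_zero_iff.mp this).1
  have hk : τ0 * (τc - 2 * τ1) * (N * (τc - 2 * τ1) - τc) / (2 * τc) ≠ 0 := by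
    simp [hτ0, hτc, ha, hb]
  show (halfTrace N τc τ0 τ1 R = 1 ↔ _) ∧ (halfTrace N τc τ0 τ1 R = -1 ↔ _)
  rw [ha', hb', div_div_eq_mul_div, sub_add_cancel, ← sub_eq_zero, eq_neg_iff_add_eq_zero,
    halfTrace_sub_one hτc hτ0 ha hb, halfTrace_add_one hτc hτ0 ha hb,
    mul_sub_mul_sub_eq_zero_iff hk, mul_sub_mul_sub_eq_zero_iff hk]
  exact ⟨Iff.rfl, Iff.rfl⟩
end

section
/- Let r > 0, N ≥ 3, ε ∈ (0, π/(2N)), α1 = π/N + ((N-1)/N)·ε. Define h = 2r·sin(α1) - 2r·(cos(π/N) - cos(α1))/tan(ε). Then h → (2r/N)·sin(π/N) as ε → 0⁺; more precisely there is a constant C > 0 depending only on r and N such that |h - (2r/N)·sin(π/N)| ≤ C·ε for all ε ∈ (0, π/(2N)). -/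
open Real Filter Topology Set

/-!
Write `a = π/N` and `k = (N-1)/N`, so that `α₁ = a + kε` and the limit is `2r(1-k) sin a`. Then
`h - 2r(1-k) sin a = 2r (sin (a + kε) - sin a) - 2r (D / tan ε - k sin a)` with
`D = cos a - cos (a + kε)`. The first bracket is at most `kε` since `sin` is 1-Lipschitz. By
Taylor, `D = kε sin a + O(ε²)`, so the second bracket equals
`((D - kε sin a) cos ε + k sin a (ε cos ε - sin ε)) / sin ε`: a numerator of order `ε²` over
`sin ε ≥ 5ε/6`.
-/

/-- The quantity `h` of the paper, for `α₁ = a + k ε`. -/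
noncomputable def brokenOrbitGap (r a k ε : ℝ) : ℝ :=
  2 * r * sin (a + k * ε) - 2 * r * (cos a - cos (a + k * ε)) / tan ε

lemma abs_one_sub_cos_le (x : ℝ) : |1 - cos x| ≤ x ^ 2 / 2 := by
  rw [abs_of_nonneg (sub_nonneg.2 (cos_le_one x))]
  linarith [one_sub_sq_div_two_le_cos (x := x)]

lemma abs_cos_sub_cos_add_sub_mul_sin_le (a u : ℝ) :
    |cos a - cos (a + u) - u * sin a| ≤ u ^ 2 / 2 + |u| ^ 3 / 6 := by
  have hsplit : cos a - cos (a + u) - u * sin a = cos a * (1 - cos u) - sin a * (u - sin u) := by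
    rw [cos_add]; ring
  rw [hsplit]
  calc |cos a * (1 - cos u) - sin a * (u - sin u)|
      ≤ |cos a| * |1 - cos u| + |sin a| * |u - sin u| := by
        rw [← abs_mul, ← abs_mul]; exact abs_sub _ _
    _ ≤ 1 * (u ^ 2 / 2) + 1 * (|u| ^ 3 / 6) := by
        gcongr
        exacts [abs_cos_le_one a, abs_one_sub_cos_le u, abs_sin_le_one a, abs_sub_sin_le u]
    _ = u ^ 2 / 2 + |u| ^ 3 / 6 := by ring

lemma abs_mul_cos_sub_sin_le (x : ℝ) : |x * cos x - sin x| ≤ 2 / 3 * |x| ^ 3 := by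
  have hsplit : x * cos x - sin x = -(x * (1 - cos x)) + (x - sin x) := by ring
  rw [hsplit]
  calc |-(x * (1 - cos x)) + (x - sin x)|
      ≤ |x| * |1 - cos x| + |x - sin x| := by
        rw [← abs_mul, ← abs_neg (x * _)]; exact abs_add_le _ _
    _ ≤ |x| * (x ^ 2 / 2) + |x| ^ 3 / 6 := by
        gcongr
        exacts [abs_one_sub_cos_le x, abs_sub_sin_le x]
    _ = 2 / 3 * |x| ^ 3 := by rw [← sq_abs x]; ring

lemma abs_div_tan_sub_le {D c ε : ℝ} (hε₀ : 0 < ε) (hε₁ : ε ≤ 1) (hc : |c| ≤ 1)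
    (hD : |D - ε * c| ≤ ε ^ 2) : |D / tan ε - c| ≤ 2 * ε := by
  have hsin : 5 / 6 * ε ≤ sin ε := by
    nlinarith [sin_ge_sub_cube hε₀.le, pow_le_pow_left₀ hε₀.le hε₁ 2]
  have hnum : |D * cos ε - c * sin ε| ≤ 5 / 3 * ε ^ 2 := by
    have hsplit : D * cos ε - c * sin ε = (D - ε * c) * cos ε + c * (ε * cos ε - sin ε) := by ring
    have hcube : ε ^ 3 ≤ ε ^ 2 := pow_le_pow_of_le_one hε₀.le hε₁ (by norm_num)
    rw [hsplit]
    calc |(D - ε * c) * cos ε + c * (ε * cos ε - sin ε)|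
        ≤ |D - ε * c| * |cos ε| + |c| * |ε * cos ε - sin ε| := by
          rw [← abs_mul, ← abs_mul]; exact abs_add_le _ _
      _ ≤ ε ^ 2 * 1 + 1 * (2 / 3 * |ε| ^ 3) := by
          gcongr
          exacts [abs_cos_le_one ε, abs_mul_cos_sub_sin_le ε]
      _ ≤ 5 / 3 * ε ^ 2 := by rw [abs_of_pos hε₀]; linarith
  have hrewrite : D / tan ε - c = (D * cos ε - c * sin ε) / sin ε := by
    have : sin ε ≠ 0 := by linarith
    rw [tan_eq_sin_div_cos, div_div_eq_mul_div]
    field_simp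
  rw [hrewrite, abs_div, abs_of_pos (a := sin ε) (by linarith)]
  calc |D * cos ε - c * sin ε| / sin ε ≤ 5 / 3 * ε ^ 2 / (5 / 6 * ε) := by
        gcongr
    _ = 2 * ε := by field_simp; ring

lemma abs_brokenOrbitGap_sub_le (r a : ℝ) {k ε : ℝ} (hk₀ : 0 ≤ k) (hk₁ : k ≤ 1)
    (hε₀ : 0 < ε) (hε₁ : ε ≤ 1) :
    |brokenOrbitGap r a k ε - 2 * r * (1 - k) * sin a| ≤ 6 * |r| * ε := by
  have hkε : k * ε ≤ ε := mul_le_of_le_one_left hε₀.le hk₁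
  have hkε₀ : 0 ≤ k * ε := by positivity
  have hsin : |sin (a + k * ε) - sin a| ≤ ε := by
    calc |sin (a + k * ε) - sin a| ≤ |a + k * ε - a| := abs_sin_sub_sin_le _ _
      _ = k * ε := by rw [add_sub_cancel_left, abs_of_nonneg hkε₀]
      _ ≤ ε := hkε
  have hcos : |cos a - cos (a + k * ε) - ε * (k * sin a)| ≤ ε ^ 2 := by
    have hsq : (k * ε) ^ 2 ≤ ε ^ 2 := pow_le_pow_left₀ hkε₀ hkε 2
    have hcube : (k * ε) ^ 3 ≤ ε ^ 2 :=
      (pow_le_pow_left₀ hkε₀ hkε 3).trans (pow_le_pow_of_le_one hε₀.le hε₁ (by norm_num))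
    have htaylor := abs_cos_sub_cos_add_sub_mul_sin_le a (k * ε)
    rw [abs_of_nonneg hkε₀] at htaylor
    rw [show ε * (k * sin a) = k * ε * sin a by ring]
    linarith [sq_nonneg ε]
  have hc : |k * sin a| ≤ 1 := by
    rw [abs_mul, abs_of_nonneg hk₀]
    exact mul_le_one₀ hk₁ (abs_nonneg _) (abs_sin_le_one a)
  have hquot := abs_div_tan_sub_le hε₀ hε₁ hc hcos
  have hsplit : brokenOrbitGap r a k ε - 2 * r * (1 - k) * sin a
      = 2 * r * ((sin (a + k * ε) - sin a)
          - ((cos a - cos (a + k * ε)) / tan ε - k * sin a)) := by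
    unfold brokenOrbitGap; ring
  rw [hsplit, abs_mul, abs_mul, abs_two]
  calc 2 * |r| * |sin (a + k * ε) - sin a - ((cos a - cos (a + k * ε)) / tan ε - k * sin a)|
      ≤ 2 * |r| * (ε + 2 * ε) := by gcongr; exact (abs_sub _ _).trans (add_le_add hsin hquot)
    _ = 6 * |r| * ε := by ring

lemma tendsto_nhdsGT_of_abs_sub_le_mul {f : ℝ → ℝ} {L C δ : ℝ} (hδ : 0 < δ)
    (h : ∀ ε ∈ Ioo 0 δ, |f ε - L| ≤ C * ε) : Tendsto f (𝓝[>] 0) (𝓝 L) := by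
  rw [← tendsto_sub_nhds_zero_iff]
  refine squeeze_zero_norm' ?_ (?_ : Tendsto (fun ε => C * ε) (𝓝[>] 0) (𝓝 0))
  · filter_upwards [Ioo_mem_nhdsGT hδ] using h
  · simpa using ((continuous_const_mul C).tendsto 0).mono_left nhdsWithin_le_nhds

theorem stmt_18 (r : ℝ) (hr : 0 < r) (N : ℕ) (hN : 3 ≤ N) :
    Filter.Tendsto
      (fun ε : ℝ =>
        2 * r * Real.sin (Real.pi / N + ((N : ℝ) - 1) / N * ε)
          - 2 * r * (Real.cos (Real.pi / N)
              - Real.cos (Real.pi / N + ((N : ℝ) - 1) / N * ε)) / Real.tan ε)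
      (nhdsWithin 0 (Set.Ioi 0))
      (nhds ((2 * r / N) * Real.sin (Real.pi / N)))
    ∧ ∃ C : ℝ, 0 < C ∧
        ∀ ε : ℝ, ε ∈ Set.Ioo 0 (Real.pi / (2 * N)) →
          |2 * r * Real.sin (Real.pi / N + ((N : ℝ) - 1) / N * ε)
              - 2 * r * (Real.cos (Real.pi / N)
                  - Real.cos (Real.pi / N + ((N : ℝ) - 1) / N * ε)) / Real.tan ε
            - (2 * r / N) * Real.sin (Real.pi / N)| ≤ C * ε := by
  have hN₃ : (3 : ℝ) ≤ N := by exact_mod_cast hN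
  have hlimit : 2 * r / N = 2 * r * (1 - ((N : ℝ) - 1) / N) := by field_simp; ring
  have hbound : ∀ ε ∈ Ioo 0 (π / (2 * N)),
      |brokenOrbitGap r (π / N) (((N : ℝ) - 1) / N) ε - 2 * r / N * sin (π / N)| ≤ 6 * r * ε := by
    rintro ε ⟨hε₀, hεδ⟩
    have hδ : π / (2 * N) ≤ 1 := by
      rw [div_le_one (by positivity)]; linarith [pi_lt_four]
    have hk₀ : 0 ≤ ((N : ℝ) - 1) / N := div_nonneg (by linarith) (by positivity)
    have hk₁ : ((N : ℝ) - 1) / N ≤ 1 := by rw [div_le_one (by positivity)]; linarith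
    simpa only [hlimit, abs_of_pos hr] using
      abs_brokenOrbitGap_sub_le r (π / N) hk₀ hk₁ hε₀ (by linarith)
  exact ⟨tendsto_nhdsGT_of_abs_sub_le_mul (by positivity) hbound, 6 * r, by positivity, hbound⟩
end

section
/- Let r > 0, N ≥ 3, ε ∈ (0, π/(2N)), and α1 = π/N + ((N-1)/N)·ε. Set Δ = r·sin(α1)·tan(ε) and suppose (1/2)·(1/N)·2r·sin(π/N - ε/N) ≤ τ0. Then the quantity |K_star|·H / (Δ/H), where K_star = 2·sin(ε/2)/τ0 and H = 2r·sin(π/N), is bounded: there exist ε0 > 0 and C > 0 depending only on N such that |K_star|·H ≤ C·(Δ/H) for all ε ∈ (0, ε0). -/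
set_option maxHeartbeats 1000000


theorem stmt_19 (N : ℕ) (hN : 3 ≤ N) :
    ∃ ε0 C : ℝ, 0 < ε0 ∧ 0 < C ∧
      ∀ r : ℝ, 0 < r →
        ∀ ε : ℝ, ε ∈ Set.Ioo 0 ε0 → ε < Real.pi / (2 * N) →
          ∀ τ0 : ℝ,
            (1 / 2) * (1 / N) * (2 * r * Real.sin (Real.pi / N - ε / N)) ≤ τ0 →
            (2 * Real.sin (ε / 2) / τ0) * (2 * r * Real.sin (Real.pi / N))
              ≤ C * ((r * Real.sin (Real.pi / N + ((N : ℝ) - 1) / N * ε) * Real.tan ε)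
                  / (2 * r * Real.sin (Real.pi / N))) := by
  have hπ := Real.pi_pos
  have hN3 : (3 : ℝ) ≤ (N : ℝ) := by exact_mod_cast hN
  have hNpos : (0 : ℝ) < (N : ℝ) := by linarith
  have hs : 0 < Real.sin (Real.pi / N) := by
    apply Real.sin_pos_of_pos_of_lt_pi
    · positivity
    · rw [div_lt_iff₀ hNpos]; nlinarith
  have hs2 : 0 < Real.sin (Real.pi / (2 * N)) := by
    apply Real.sin_pos_of_pos_of_lt_pi
    · positivity
    · rw [div_lt_iff₀ (by positivity)]; nlinarith
  refine ⟨1, 8 * N * Real.sin (Real.pi / N) / Real.sin (Real.pi / (2 * N)),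
    one_pos, by positivity, ?_⟩
  intro r hr ε hε hεπ τ0 hτ
  obtain ⟨hε0, hε1⟩ := hε
  have hεhalf : ε < Real.pi / 2 := by
    have : Real.pi / (2 * N) ≤ Real.pi / 2 := by
      apply div_le_div_of_nonneg_left hπ.le two_pos; nlinarith
    linarith
  have htan : 0 < Real.tan ε := Real.tan_pos_of_pos_of_lt_pi_div_two hε0 hεhalf
  have hsinh : 0 < Real.sin (ε / 2) :=
    Real.sin_pos_of_pos_of_lt_pi (by linarith) (by linarith)
  have h_sin_tan : Real.sin (ε / 2) ≤ Real.tan ε := by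
    have h1 : Real.sin (ε / 2) < ε / 2 := Real.sin_lt (by linarith)
    have h2 : ε < Real.tan ε := Real.lt_tan hε0 hεhalf
    linarith
  -- monotonicity 1 : sin (π/(2N)) ≤ sin (π/N - ε/N)
  have hεN : ε / N ≤ Real.pi / (2 * N) := by
    rw [div_le_div_iff₀ hNpos (by positivity)]; nlinarith
  have hmono1 : Real.sin (Real.pi / (2 * N)) ≤ Real.sin (Real.pi / N - ε / N) := by
    apply Real.sin_le_sin_of_le_of_le_pi_div_two
    · have : 0 < Real.pi / (2 * N) := by positivity
      linarith
    · have h3 : Real.pi / N ≤ Real.pi / 2 := by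
        rw [div_le_div_iff₀ hNpos two_pos]; nlinarith
      have : 0 < ε / N := by positivity
      linarith
    · have : Real.pi / N - Real.pi / (2 * N) = Real.pi / (2 * N) := by
        field_simp; ring
      linarith
  -- monotonicity 2 : sin (π/N) ≤ sin α1
  have hmono2 : Real.sin (Real.pi / N)
      ≤ Real.sin (Real.pi / N + ((N : ℝ) - 1) / N * ε) := by
    apply Real.sin_le_sin_of_le_of_le_pi_div_two
    · have : 0 < Real.pi / N := by positivity
      linarith
    · have h3 : Real.pi / N + Real.pi / (2 * N) ≤ Real.pi / 2 := by
        rw [div_add_div _ _ (ne_of_gt hNpos) (by positivity), div_le_div_iff₀ (by positivity) two_pos]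
        nlinarith [mul_le_mul_of_nonneg_left hN3 (by positivity : (0:ℝ) ≤ Real.pi * N)]
      have h4 : ((N : ℝ) - 1) / N * ε ≤ ε := by
        rw [div_mul_eq_mul_div, div_le_iff₀ hNpos]; nlinarith
      linarith
    · have : 0 ≤ ((N : ℝ) - 1) / N * ε :=
        mul_nonneg (div_nonneg (by linarith) hNpos.le) hε0.le
      linarith
  have hτ' : r / N * Real.sin (Real.pi / (2 * N)) ≤ τ0 := by
    calc r / N * Real.sin (Real.pi / (2 * N))
        ≤ r / N * Real.sin (Real.pi / N - ε / N) := by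
          apply mul_le_mul_of_nonneg_left hmono1; positivity
      _ = (1 / 2) * (1 / N) * (2 * r * Real.sin (Real.pi / N - ε / N)) := by ring
      _ ≤ τ0 := hτ
  have hτ0 : 0 < τ0 := lt_of_lt_of_le (by positivity) hτ'
  set s := Real.sin (Real.pi / N)
  set s2 := Real.sin (Real.pi / (2 * N))
  set A := Real.sin (Real.pi / N + ((N : ℝ) - 1) / N * ε)
  have hA : 0 < A := lt_of_lt_of_le hs hmono2
  have h5 : s * Real.sin (ε / 2) ≤ A * Real.tan ε :=
    mul_le_mul hmono2 h_sin_tan hsinh.le hA.le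
  have hτ'' : r * s2 ≤ τ0 * N := by
    rw [div_mul_eq_mul_div, div_le_iff₀ hNpos] at hτ'
    linarith
  have hcomb : (s * Real.sin (ε / 2)) * (r * s2) ≤ (A * Real.tan ε) * (τ0 * N) :=
    mul_le_mul h5 hτ'' (by positivity) (by positivity)
  rw [div_mul_eq_mul_div, mul_div_assoc', div_le_div_iff₀ hτ0 (by positivity),
    div_mul_eq_mul_div, div_mul_eq_mul_div, le_div_iff₀ hs2]
  nlinarith [mul_le_mul_of_nonneg_left hcomb (by positivity : (0:ℝ) ≤ 8 * r * s)]
end
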